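/- Let p be a prime and k ≥ 2. Then the graph H_k(p) is isomorphic to the graph H'_{k+1}(p), via the map sending a vertex (a_0, a_1, …, a_{k−1}) of the first partite set of H_k(p) to the point (a_{k−1}, a_{k−2}, …, a_0) of H'_{k+1}(p), and a vertex (b_0, b_1, …, b_{k−1}) of the second partite set of H_k(p) to the line [b_{k−1}, b_{k−2}, …, b_0] of H'_{k+1}(p). -/

import Mathlib

open Finset

/-- Adjacency relation of Wenger's graph `H_k(p)`: `a = (a_0, …, a_{k−1})` and
`b = (b_0, …, b_{k−1})` form an edge iff `b_j = a_j + a_{j+1} * b_{k−1}` for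
`j = 0, …, k−2`. -/
def hAdj {F : Type*} [Field F] {k : ℕ} (a b : Fin k → F) : Prop :=
  ∀ j : Fin k, ∀ h : (j : ℕ) + 1 < k,
    b j = a j + a ⟨(j : ℕ) + 1, h⟩ * b ⟨k - 1, by omega⟩

/-- Wenger's graph `H_k(p)`, as a bipartite graph on two copies of `F_p^k`
(`a`-vertices as `inl`, `b`-vertices as `inr`). -/
def HGraph (F : Type*) [Field F] (k : ℕ) :
    SimpleGraph ((Fin k → F) ⊕ (Fin k → F)) where
  Adj x y :=
    match x, y with
    | Sum.inl a, Sum.inr b => hAdj a b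
    | Sum.inr b, Sum.inl a => hAdj a b
    | _, _ => False
  symm := ⟨by rintro (a | b) (a' | b') h <;> exact h⟩
  loopless := ⟨by rintro (a | b) h <;> exact h⟩

/-- Adjacency relation of the graph `H'_{m+2}(q)`: the point `(p_2, …, p_{m+2})` is
adjacent to the line `[l_1, l_3, …, l_{m+2}]` iff `l_k − p_k = l_1 * p_{k−1}` for
`k = 3, …, m+2` (both encoded as vectors indexed by `Fin (m+1)`). -/
def hPrimeAdj {F : Type*} [Field F] {m : ℕ} (p l : Fin (m + 1) → F) : Prop :=
  ∀ i : Fin m, l i.succ - p i.succ = l 0 * p i.castSucc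

/-- The graph `H'_{m+2}(q)`, with points as `inl` and lines as `inr`. -/
def HPrimeGraph (F : Type*) [Field F] (m : ℕ) :
    SimpleGraph ((Fin (m + 1) → F) ⊕ (Fin (m + 1) → F)) where
  Adj x y :=
    match x, y with
    | Sum.inl p, Sum.inr l => hPrimeAdj p l
    | Sum.inr l, Sum.inl p => hPrimeAdj p l
    | _, _ => False
  symm := ⟨by rintro (p | l) (p' | l') h <;> exact h⟩
  loopless := ⟨by rintro (p | l) h <;> exact h⟩

def revCongr (F : Type*) {n k : ℕ} (h : n = k) : (Fin k → F) ≃ (Fin n → F) :=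
  Equiv.arrowCongr (Fin.revPerm.trans (finCongr h.symm)) (Equiv.refl F)

section

variable {F : Type*} [Field F]

theorem hAdj_iff {m : ℕ} (a b : Fin (m + 1) → F) :
    hAdj a b ↔ ∀ i : Fin m, b i.castSucc = a i.castSucc + a i.succ * b (Fin.last m) := by
  have hlast : (⟨m + 1 - 1, by omega⟩ : Fin (m + 1)) = Fin.last m := Fin.ext (by simp)
  constructor
  · intro h i
    have hi := h i.castSucc i.succ.is_lt
    rw [hlast] at hi
    exact hi
  · intro h j hj
    rw [hlast]
    exact h ⟨j, by omega⟩

theorem hPrimeAdj_comp_rev_iff {m : ℕ} (a b : Fin (m + 1) → F) :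
    hPrimeAdj (a ∘ Fin.rev) (b ∘ Fin.rev) ↔ hAdj a b := by
  rw [hAdj_iff, ← Fin.revPerm.forall_congr_right]
  refine forall_congr' fun i => ?_
  -- `Fin.rev` sends `0` to `last m` (so `l_1` becomes `b_{k−1}`) and swaps `succ` with `castSucc`
  simp only [Function.comp, Fin.revPerm_apply, Fin.rev_succ, Fin.rev_castSucc,
    Fin.rev_zero]
  exact sub_eq_iff_eq_add'.trans (by rw [mul_comm])

theorem hPrimeAdj_revCongr_iff {m k : ℕ} (h : m + 1 = k) (a b : Fin k → F) :
    hPrimeAdj (revCongr F h a) (revCongr F h b) ↔ hAdj a b := by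
  subst h
  exact hPrimeAdj_comp_rev_iff a b

end

def hGraphIsoHPrimeGraph (F : Type*) [Field F] {m k : ℕ} (h : m + 1 = k) :
    HGraph F k ≃g HPrimeGraph F m where
  toEquiv := Equiv.sumCongr (revCongr F h) (revCongr F h)
  map_rel_iff' := by
    rintro (a | b) (a' | b')
    all_goals first | exact Iff.rfl | exact hPrimeAdj_revCongr_iff h _ _

/-- For a prime `p` and `k ≥ 2`, the coordinate-reversal map
`(a_0, …, a_{k−1}) ↦ (a_{k−1}, …, a_0)` on both partite sets is a graph isomorphism
from `H_k(p)` to `H'_{k+1}(p)` (the latter being `HPrimeGraph` with `m = k − 1`). -/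
theorem h_iso_hPrime (p k : ℕ) (hp : p.Prime) (hk : 2 ≤ k) :
    haveI : Fact p.Prime := ⟨hp⟩
    ∃ e : HGraph (ZMod p) k ≃g HPrimeGraph (ZMod p) (k - 1),
      (∀ a : Fin k → ZMod p,
        e (Sum.inl a) = Sum.inl (fun j => a (Fin.rev (Fin.cast (by omega) j)))) ∧
      (∀ b : Fin k → ZMod p,
        e (Sum.inr b) = Sum.inr (fun j => b (Fin.rev (Fin.cast (by omega) j)))) :=
  haveI : Fact p.Prime := ⟨hp⟩
  ⟨hGraphIsoHPrimeGraph (ZMod p) (by omega), fun _ => rfl, fun _ => rfl⟩
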